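/- arXiv:2504.04845 — 3 statements merged into one kernel-verified Lean document; each statement's English description precedes it below -/
import Mathlib

section
/- (Björck) Let d ≥ 1 and α > 2. Among all Borel probability measures μ on the unit sphere S^d ⊂ ℝ^{d+1}, the energy integral I_α(μ) = ∬_{S^d × S^d} ‖x − y‖^α dμ(x) dμ(y), with ‖·‖ the Euclidean norm, is maximized exactly by the measures of the form (1/2)(δ_p + δ_{−p}) for p ∈ S^d; that is, every such measure is a maximizer, and every maximizer has this form. -/
open MeasureTheory Metric ENNReal


set_option linter.unusedSectionVars false
set_option maxHeartbeats 1000000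

namespace BjorckAux

section Scalar


lemma key_le {α t : ℝ} (hα : 2 < α) (ht0 : 0 ≤ t) (ht2 : t ≤ 2) :
    t ^ α ≤ 2 ^ (α - 2) * t ^ (2 : ℝ) := by
  rcases eq_or_lt_of_le ht0 with h | h
  · rw [← h, Real.zero_rpow (by positivity), Real.zero_rpow (by norm_num), mul_zero]
  · have : t ^ α = t ^ (α - 2) * t ^ (2 : ℝ) := by
      rw [← Real.rpow_add h]; ring_nf
    rw [this]
    exact mul_le_mul_of_nonneg_right (Real.rpow_le_rpow ht0 ht2 (by linarith))
      (Real.rpow_nonneg ht0 2)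

lemma key_lt {α t : ℝ} (hα : 2 < α) (ht0 : 0 < t) (ht2 : t < 2) :
    t ^ α < 2 ^ (α - 2) * t ^ (2 : ℝ) := by
  have : t ^ α = t ^ (α - 2) * t ^ (2 : ℝ) := by
    rw [← Real.rpow_add ht0]; ring_nf
  rw [this]
  have h2 : t ^ (α - 2) < 2 ^ (α - 2) :=
    Real.rpow_lt_rpow ht0.le ht2 (by linarith)
  have : (0:ℝ) < t ^ (2:ℝ) := Real.rpow_pos_of_pos ht0 2
  nlinarith

lemma key_eq {α t : ℝ} (hα : 2 < α) (ht0 : 0 ≤ t) (ht2 : t ≤ 2)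
    (h : t ^ α = 2 ^ (α - 2) * t ^ (2 : ℝ)) : t = 0 ∨ t = 2 := by
  by_contra hc
  push_neg at hc
  exact absurd h (ne_of_lt (key_lt hα (ht0.lt_of_ne (Ne.symm hc.1)) (ht2.lt_of_ne hc.2)))

lemma cont_rpow {𝕜 : Type*} [NormedAddCommGroup 𝕜] (α : ℝ) (hα : 0 ≤ α) :
    Continuous fun z : 𝕜 × 𝕜 => ‖z.1 - z.2‖ ^ α :=
  (continuous_fst.sub continuous_snd).norm.rpow_const fun _ => Or.inr hα


end Scalar

section Space
variable {E : Type*} [NormedAddCommGroup E] [InnerProductSpace ℝ E]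
  [MeasurableSpace E] [BorelSpace E] [CompleteSpace E] [SecondCountableTopology E]



variable {E : Type*} [NormedAddCommGroup E] [InnerProductSpace ℝ E]
  [MeasurableSpace E] [BorelSpace E] [CompleteSpace E] [SecondCountableTopology E]

lemma ae_norm_one (ν : Measure E) [IsProbabilityMeasure ν]
    (h : ν (sphere (0 : E) 1) = 1) : ∀ᵐ y ∂ν, ‖y‖ = 1 := by
  have hc : ν (sphere (0 : E) 1)ᶜ = 0 := by
    rw [measure_compl (isClosed_sphere.measurableSet) (measure_ne_top _ _), h, measure_univ,
      tsub_self]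
  rw [ae_iff]
  convert hc using 2
  ext y
  simp [mem_sphere_zero_iff_norm]

lemma intble_rpow (α : ℝ) (hα : 0 ≤ α) (ν : Measure E) [IsProbabilityMeasure ν]
    (h : ν (sphere (0 : E) 1) = 1) (x : E) :
    Integrable (fun y => ‖x - y‖ ^ α) ν := by
  refine (integrable_const ((‖x‖ + 1) ^ α)).mono'
    (((continuous_const.sub continuous_id).norm.rpow_const fun _ => Or.inr hα).aestronglyMeasurable) ?_
  filter_upwards [ae_norm_one ν h] with y hy
  rw [Real.norm_of_nonneg (Real.rpow_nonneg (norm_nonneg _) _)]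
  exact Real.rpow_le_rpow (norm_nonneg _) ((norm_sub_le x y).trans (by rw [hy])) hα

lemma inner_int_le_pow (α : ℝ) (hα : 0 ≤ α) (ν : Measure E) [IsProbabilityMeasure ν]
    (h : ν (sphere (0 : E) 1) = 1) {x : E} (hx : ‖x‖ = 1) :
    ∫ y, ‖x - y‖ ^ α ∂ν ≤ 2 ^ α := by
  calc ∫ y, ‖x - y‖ ^ α ∂ν ≤ ∫ _, (2:ℝ) ^ α ∂ν := by
        refine integral_mono_ae (intble_rpow α hα ν h x) (integrable_const _) ?_
        filter_upwards [ae_norm_one ν h] with y hy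
        exact Real.rpow_le_rpow (norm_nonneg _)
          ((norm_sub_le x y).trans (by rw [hx, hy]; norm_num)) hα
    _ = 2 ^ α := by simp

lemma sm_outer (α : ℝ) (hα : 0 ≤ α) (ν : Measure E) [SFinite ν] :
    StronglyMeasurable fun x : E => ∫ y, ‖x - y‖ ^ α ∂ν :=
  (cont_rpow α hα).stronglyMeasurable.integral_prod_right'

lemma intble_outer (α : ℝ) (hα : 0 ≤ α) (ν : Measure E) [IsProbabilityMeasure ν]
    (h : ν (sphere (0 : E) 1) = 1) :
    Integrable (fun x : E => ∫ y, ‖x - y‖ ^ α ∂ν) ν := by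
  refine (integrable_const ((2:ℝ) ^ α)).mono'
    (sm_outer α hα ν).aestronglyMeasurable ?_
  filter_upwards [ae_norm_one ν h] with x hx
  rw [Real.norm_of_nonneg (integral_nonneg fun y => Real.rpow_nonneg (norm_nonneg _) _)]
  exact inner_int_le_pow α hα ν h hx

lemma intble_id (ν : Measure E) [IsProbabilityMeasure ν]
    (h : ν (sphere (0 : E) 1) = 1) : Integrable (fun y : E => y) ν := by
  refine (integrable_const (1:ℝ)).mono' continuous_id.aestronglyMeasurable ?_
  filter_upwards [ae_norm_one ν h] with y hy
  simp [hy]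

lemma intble_inner (ν : Measure E) [IsProbabilityMeasure ν]
    (h : ν (sphere (0 : E) 1) = 1) (x : E) :
    Integrable (fun y : E => (inner ℝ x y : ℝ)) ν := by
  refine (integrable_const ‖x‖).mono'
    (continuous_const.inner continuous_id).aestronglyMeasurable ?_
  filter_upwards [ae_norm_one ν h] with y hy
  calc ‖(inner ℝ x y : ℝ)‖ ≤ ‖x‖ * ‖y‖ := norm_inner_le_norm x y
    _ = ‖x‖ := by rw [hy, mul_one]

lemma intble_normsq (ν : Measure E) [IsProbabilityMeasure ν]
    (h : ν (sphere (0 : E) 1) = 1) :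
    Integrable (fun y : E => ‖y‖ ^ 2) ν := by
  refine (integrable_const (1:ℝ)).mono'
    (continuous_norm.pow 2).aestronglyMeasurable ?_
  filter_upwards [ae_norm_one ν h] with y hy
  simp [hy]


variable {E : Type*} [NormedAddCommGroup E] [InnerProductSpace ℝ E]
  [MeasurableSpace E] [BorelSpace E] [CompleteSpace E] [SecondCountableTopology E]

lemma inner_quad (ν : Measure E) [IsProbabilityMeasure ν]
    (h : ν (sphere (0 : E) 1) = 1) {x : E} (hx : ‖x‖ = 1) :
    ∫ y, ‖x - y‖ ^ (2:ℝ) ∂ν = 2 - 2 * (inner ℝ x (∫ y, y ∂ν) : ℝ) := by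
  have h1 : ∫ y, ‖x - y‖ ^ (2:ℝ) ∂ν
      = ∫ y, (‖x‖ ^ 2 + ‖y‖ ^ 2 - 2 * (inner ℝ x y : ℝ)) ∂ν := by
    refine integral_congr_ae (Filter.Eventually.of_forall fun y => ?_)
    beta_reduce
    rw [show ‖x - y‖ ^ (2:ℝ) = ‖x - y‖ ^ (2:ℕ) from Real.rpow_two _, norm_sub_sq_real]; ring
  have hfg : Integrable (fun y : E => ‖x‖^2 + ‖y‖^2) ν :=
    (integrable_const _).add (intble_normsq ν h)
  have hc : Integrable (fun y : E => 2 * (inner ℝ x y : ℝ)) ν :=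
    (intble_inner ν h x).const_mul 2
  rw [h1, integral_sub hfg hc,
    integral_add (integrable_const _) (intble_normsq ν h), integral_const_mul,
    integral_inner (intble_id ν h)]
  have h2 : ∫ y, ‖y‖ ^ 2 ∂ν = 1 := by
    rw [integral_congr_ae (g := fun _ => (1:ℝ))
      (by filter_upwards [ae_norm_one ν h] with y hy; simp [hy])]
    simp
  rw [h2]
  simp [hx]
  ring

lemma quad_energy (ν : Measure E) [IsProbabilityMeasure ν]
    (h : ν (sphere (0 : E) 1) = 1) :
    ∫ x, ∫ y, ‖x - y‖ ^ (2:ℝ) ∂ν ∂ν = 2 - 2 * ‖∫ y, y ∂ν‖ ^ 2 := by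
  set b := ∫ y, y ∂ν with hb
  have h1 : (fun x => ∫ y, ‖x - y‖ ^ (2:ℝ) ∂ν)
      =ᵐ[ν] fun x => 2 - 2 * (inner ℝ x b : ℝ) := by
    filter_upwards [ae_norm_one ν h] with x hx
    exact inner_quad ν h hx
  have h2 : ∀ x : E, (inner ℝ x b : ℝ) = inner ℝ b x := fun x => real_inner_comm b x
  rw [integral_congr_ae h1,
    integral_sub (integrable_const _)
      ((by
        refine Integrable.const_mul ?_ 2
        simp_rw [h2]
        exact (intble_id ν h).const_inner b  : Integrable (fun x => 2 * (inner ℝ x b : ℝ)) ν)),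
    integral_const_mul]
  simp_rw [h2]
  rw [integral_inner (intble_id ν h), ← hb, real_inner_self_eq_norm_sq]
  simp


variable {E : Type*} [NormedAddCommGroup E] [InnerProductSpace ℝ E]
  [MeasurableSpace E] [BorelSpace E] [CompleteSpace E] [SecondCountableTopology E]

lemma inner_le {α : ℝ} (hα : 2 < α) (ν : Measure E) [IsProbabilityMeasure ν]
    (h : ν (sphere (0 : E) 1) = 1) {x : E} (hx : ‖x‖ = 1) :
    ∫ y, ‖x - y‖ ^ α ∂ν ≤ 2 ^ (α - 2) * ∫ y, ‖x - y‖ ^ (2:ℝ) ∂ν := by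
  rw [← integral_const_mul]
  refine integral_mono_ae (intble_rpow α (by linarith) ν h x)
    ((intble_rpow 2 (by norm_num) ν h x).const_mul _) ?_
  filter_upwards [ae_norm_one ν h] with y hy
  exact key_le hα (norm_nonneg _) ((norm_sub_le x y).trans (by rw [hx, hy]; norm_num))

lemma energy_le_quad {α : ℝ} (hα : 2 < α) (ν : Measure E) [IsProbabilityMeasure ν]
    (h : ν (sphere (0 : E) 1) = 1) :
    ∫ x, ∫ y, ‖x - y‖ ^ α ∂ν ∂ν
      ≤ 2 ^ (α - 2) * ∫ x, ∫ y, ‖x - y‖ ^ (2:ℝ) ∂ν ∂ν := by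
  rw [← integral_const_mul]
  refine integral_mono_ae (intble_outer α (by linarith) ν h)
    ((intble_outer 2 (by norm_num) ν h).const_mul _) ?_
  filter_upwards [ae_norm_one ν h] with x hx
  exact inner_le hα ν h hx

lemma two_rpow_split {α : ℝ} : (2:ℝ) ^ (α - 2) * 2 = 2 ^ (α - 1) := by
  rw [show α - 1 = (α - 2) + 1 by ring, Real.rpow_add two_pos, Real.rpow_one]

lemma energy_le {α : ℝ} (hα : 2 < α) (ν : Measure E) [IsProbabilityMeasure ν]
    (h : ν (sphere (0 : E) 1) = 1) :
    ∫ x, ∫ y, ‖x - y‖ ^ α ∂ν ∂ν ≤ 2 ^ (α - 1) := by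
  refine (energy_le_quad hα ν h).trans ?_
  rw [quad_energy ν h, ← two_rpow_split]
  have h1 : (0:ℝ) < 2 ^ (α - 2) := Real.rpow_pos_of_pos two_pos _
  nlinarith [sq_nonneg ‖∫ y, y ∂ν‖]


variable {E : Type*} [NormedAddCommGroup E] [InnerProductSpace ℝ E]
  [MeasurableSpace E] [BorelSpace E] [CompleteSpace E] [SecondCountableTopology E]

lemma integrable_dirac'' {X : Type*} [MeasurableSpace X] [MeasurableSingletonClass X]
    {G : Type*} [NormedAddCommGroup G] (f : X → G) (a : X) : Integrable f (Measure.dirac a) :=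
  (integrable_const (f a)).congr (ae_eq_dirac f).symm

lemma antipodal_prob (p : E) :
    IsProbabilityMeasure (((1 : ℝ≥0∞) / 2) • (Measure.dirac p + Measure.dirac (-p))) := by
  constructor
  rw [Measure.smul_apply, Measure.add_apply]
  simp only [Measure.dirac_apply_of_mem (Set.mem_univ _)]
  rw [one_add_one_eq_two, one_div, smul_eq_mul,
    ENNReal.inv_mul_cancel (by norm_num) (by norm_num)]

lemma antipodal_sphere (p : E) (hp : ‖p‖ = 1) :
    (((1 : ℝ≥0∞) / 2) • (Measure.dirac p + Measure.dirac (-p)))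
      (sphere (0 : E) 1) = 1 := by
  rw [Measure.smul_apply, Measure.add_apply,
    Measure.dirac_apply' _ isClosed_sphere.measurableSet,
    Measure.dirac_apply' _ isClosed_sphere.measurableSet]
  rw [Set.indicator_of_mem (by simp [mem_sphere_zero_iff_norm, hp]),
    Set.indicator_of_mem (by simp [mem_sphere_zero_iff_norm, hp])]
  simp only [Pi.one_apply, smul_eq_mul, one_add_one_eq_two, one_div]
  rw [ENNReal.inv_mul_cancel (by norm_num) (by norm_num)]

lemma norm_two_smul (p : E) (hp : ‖p‖ = 1) : ‖p + p‖ = 2 := by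
  rw [← two_smul ℝ p, norm_smul]
  simp [hp]

lemma energy_antipodal {α : ℝ} (hα : 0 < α) (p : E) (hp : ‖p‖ = 1) :
    ∫ x, ∫ y, ‖x - y‖ ^ α ∂(((1 : ℝ≥0∞) / 2) • (Measure.dirac p + Measure.dirac (-p)))
      ∂(((1 : ℝ≥0∞) / 2) • (Measure.dirac p + Measure.dirac (-p))) = 2 ^ (α - 1) := by
  have hin : ∀ x : E, ∫ y, ‖x - y‖ ^ α
      ∂(((1 : ℝ≥0∞) / 2) • (Measure.dirac p + Measure.dirac (-p)))
      = (1/2) * (‖x - p‖ ^ α + ‖x + p‖ ^ α) := by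
    intro x
    rw [integral_smul_measure, integral_add_measure (integrable_dirac'' _ _)
      (integrable_dirac'' _ _), integral_dirac, integral_dirac]
    simp [sub_neg_eq_add]
  simp_rw [hin]
  rw [integral_smul_measure, integral_add_measure (integrable_dirac'' _ _)
    (integrable_dirac'' _ _), integral_dirac, integral_dirac]
  have h1 : ‖p - p‖ ^ α = 0 := by
    rw [sub_self, norm_zero, Real.zero_rpow hα.ne']
  have h2 : ‖p + p‖ ^ α = 2 ^ α := by rw [norm_two_smul p hp]
  have h3 : ‖-p - p‖ ^ α = 2 ^ α := by
    rw [show -p - p = -(p + p) by abel, norm_neg, norm_two_smul p hp]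
  have h4 : ‖-p + p‖ ^ α = 0 := by
    rw [neg_add_cancel, norm_zero, Real.zero_rpow hα.ne']
  rw [h1, h2, h3, h4]
  rw [show α - 1 = α + (-1) by ring, Real.rpow_add two_pos, Real.rpow_neg_one]
  simp
  ring

variable {E : Type*} [NormedAddCommGroup E] [InnerProductSpace ℝ E]
  [MeasurableSpace E] [BorelSpace E] [CompleteSpace E] [SecondCountableTopology E]

lemma ne_neg_of_norm_one {p : E} (hp : ‖p‖ = 1) : p ≠ -p := by
  intro h
  have hpp : p + p = 0 := by nth_rewrite 2 [h]; exact add_neg_cancel p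
  have h2 : (2:ℝ) • p = 0 := by rw [two_smul]; exact hpp
  rcases smul_eq_zero.1 h2 with h' | h'
  · norm_num at h'
  · rw [h', norm_zero] at hp; norm_num at hp

lemma norm_eq_two_imp {x y : E} (hx : ‖x‖ = 1) (hy : ‖y‖ = 1) (h : ‖x - y‖ = 2) :
    y = -x := by
  have hpar := parallelogram_law_with_norm ℝ x y
  rw [h, hx, hy] at hpar
  have : ‖x + y‖ = 0 := by nlinarith [norm_nonneg (x + y)]
  have := norm_eq_zero.1 this
  linear_combination (norm := abel) this

lemma pair_decomp (μ : Measure E) {p q : E} (hpq : p ≠ q)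
    (hnull : μ ({p, q} : Set E)ᶜ = 0) :
    μ = μ {p} • Measure.dirac p + μ {q} • Measure.dirac q := by
  refine Measure.ext fun s hs => ?_
  rw [Measure.add_apply, Measure.smul_apply, Measure.smul_apply,
    Measure.dirac_apply' _ hs, Measure.dirac_apply' _ hs]
  rw [← measure_inter_conull hnull]
  by_cases hp : p ∈ s <;> by_cases hq : q ∈ s
  · have : s ∩ {p, q} = {p, q} := by
      ext z; constructor
      · exact fun hz => hz.2
      · rintro (rfl | rfl) <;> exact ⟨by assumption, by simp⟩
    rw [this, Set.insert_eq,
      measure_union (by simp [Set.disjoint_singleton, hpq]) (measurableSet_singleton _)]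
    simp [Set.indicator_of_mem, hp, hq]
  · have : s ∩ {p, q} = {p} := by
      ext z; constructor
      · rintro ⟨hzs, rfl | rfl⟩
        · rfl
        · exact absurd hzs hq
      · rintro rfl; exact ⟨hp, by simp⟩
    rw [this]
    simp [Set.indicator_of_mem, Set.indicator_of_notMem, hp, hq]
  · have : s ∩ {p, q} = {q} := by
      ext z; constructor
      · rintro ⟨hzs, rfl | rfl⟩
        · exact absurd hzs hp
        · rfl
      · rintro rfl; exact ⟨hq, by simp⟩
    rw [this]
    simp [Set.indicator_of_mem, Set.indicator_of_notMem, hp, hq]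
  · have : s ∩ {p, q} = ∅ := by
      ext z; constructor
      · rintro ⟨hzs, rfl | rfl⟩
        · exact absurd hzs hp
        · exact absurd hzs hq
      · rintro ⟨⟩
    rw [this]
    simp [Set.indicator_of_notMem, hp, hq]

lemma maximizer_structure {α : ℝ} (hα : 2 < α) (μ : Measure E) [IsProbabilityMeasure μ]
    (h : μ (sphere (0 : E) 1) = 1)
    (hmax : 2 ^ (α - 1) ≤ ∫ x, ∫ y, ‖x - y‖ ^ α ∂μ ∂μ) :
    ∃ p : E, ‖p‖ = 1 ∧
      μ = ((1 : ℝ≥0∞) / 2) • (Measure.dirac p + Measure.dirac (-p)) := by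
  have h2pos : (0:ℝ) < 2 ^ (α - 2) := Real.rpow_pos_of_pos two_pos _
  have hIα : ∫ x, ∫ y, ‖x - y‖ ^ α ∂μ ∂μ = 2 ^ (α - 1) :=
    le_antisymm (energy_le hα μ h) hmax
  -- barycenter is zero
  have hq := energy_le_quad hα μ h
  have hqe := quad_energy μ h
  have hbsq : ‖∫ y, y ∂μ‖ ^ 2 = 0 := by
    rw [hqe] at hq
    rw [hIα] at hq
    nlinarith [sq_nonneg ‖∫ y, y ∂μ‖, two_rpow_split (α := α)]
  have hb : ∫ y, y ∂μ = 0 := norm_eq_zero.1 (pow_eq_zero_iff (by norm_num) |>.1 hbsq)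
  have hI2 : ∫ x, ∫ y, ‖x - y‖ ^ (2:ℝ) ∂μ ∂μ = 2 := by
    rw [hqe, hbsq]; ring
  -- the deficiency function has zero integral
  set F : E → ℝ :=
    fun x => 2 ^ (α - 2) * (∫ y, ‖x - y‖ ^ (2:ℝ) ∂μ) - ∫ y, ‖x - y‖ ^ α ∂μ with hF
  have hFint : Integrable F μ :=
    ((intble_outer 2 (by norm_num) μ h).const_mul _).sub (intble_outer α (by linarith) μ h)
  have hFnn : 0 ≤ᵐ[μ] F := by
    filter_upwards [ae_norm_one μ h] with x hx
    simpa [hF, sub_nonneg] using inner_le hα μ h hx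
  have hFzero : ∫ x, F x ∂μ = 0 := by
    rw [hF]
    rw [integral_sub ((intble_outer 2 (by norm_num) μ h).const_mul _)
      (intble_outer α (by linarith) μ h), integral_const_mul, hI2, hIα, two_rpow_split,
      sub_self]
  have hFae : F =ᵐ[μ] 0 := (integral_eq_zero_iff_of_nonneg_ae hFnn hFint).1 hFzero
  -- pointwise structure
  have hstruct : ∀ᵐ x ∂μ, ∀ᵐ y ∂μ, y = x ∨ y = -x := by
    filter_upwards [hFae, ae_norm_one μ h] with x hx0 hx1
    have hgint0 : ∫ y, (2 ^ (α - 2) * ‖x - y‖ ^ (2:ℝ) - ‖x - y‖ ^ α) ∂μ = 0 := by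
      rw [integral_sub ((intble_rpow 2 (by norm_num) μ h x).const_mul _)
        (intble_rpow α (by linarith) μ h x), integral_const_mul]
      simpa [hF, sub_eq_zero] using hx0
    have hgnn : 0 ≤ᵐ[μ] fun y => 2 ^ (α - 2) * ‖x - y‖ ^ (2:ℝ) - ‖x - y‖ ^ α := by
      filter_upwards [ae_norm_one μ h] with y hy
      have := key_le hα (norm_nonneg (x - y))
        ((norm_sub_le x y).trans (by rw [hx1, hy]; norm_num))
      simp only [Pi.zero_apply]
      linarith
    have hgint : Integrable (fun y => 2 ^ (α - 2) * ‖x - y‖ ^ (2:ℝ) - ‖x - y‖ ^ α) μ :=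
      ((intble_rpow 2 (by norm_num) μ h x).const_mul _).sub
        (intble_rpow α (by linarith) μ h x)
    have hgae := (integral_eq_zero_iff_of_nonneg_ae hgnn hgint).1 hgint0
    filter_upwards [hgae, ae_norm_one μ h] with y hy0 hy1
    have heq : ‖x - y‖ ^ α = 2 ^ (α - 2) * ‖x - y‖ ^ (2:ℝ) := by
      simp only [Pi.zero_apply] at hy0
      linarith
    rcases key_eq hα (norm_nonneg (x - y))
      ((norm_sub_le x y).trans (by rw [hx1, hy1]; norm_num)) heq with h0 | h2
    · left
      have := norm_sub_eq_zero_iff.1 h0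
      exact this.symm
    · right
      simpa using norm_eq_two_imp hx1 hy1 h2
  -- extract the point p
  have hne : (ae μ).NeBot := ae_neBot.2 (IsProbabilityMeasure.ne_zero μ)
  obtain ⟨p, hp1, hp2⟩ := ((ae_norm_one μ h).and hstruct).exists
  refine ⟨p, hp1, ?_⟩
  have hpq : p ≠ -p := ne_neg_of_norm_one hp1
  have hnull : μ ({p, -p} : Set E)ᶜ = 0 := by
    have : ({p, -p} : Set E)ᶜ = {y | ¬(y = p ∨ y = -p)} := by
      ext z
      simp [Set.mem_compl_iff]
    rw [this]
    exact ae_iff.1 hp2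
  have hdec := pair_decomp μ hpq hnull
  have hpair : μ ({p, -p} : Set E) = 1 := by
    rw [← Set.univ_inter ({p, -p} : Set E), measure_inter_conull hnull]
    exact measure_univ
  have hsum : μ {p} + μ ({-p} : Set E) = 1 := by
    rw [← hpair, Set.insert_eq,
      measure_union (by simp [Set.disjoint_singleton, hpq]) (measurableSet_singleton _)]
  have hbar : (μ {p}).toReal • p + (μ ({-p} : Set E)).toReal • (-p) = 0 := by
    rw [← hb]
    conv_rhs => rw [hdec]
    rw [integral_add_measure
      ((integrable_dirac'' (fun y : E => y) p).smul_measure (measure_ne_top μ _))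
      ((integrable_dirac'' (fun y : E => y) (-p)).smul_measure (measure_ne_top μ _)),
      integral_smul_measure, integral_smul_measure, integral_dirac, integral_dirac]
  have hp0 : p ≠ 0 := fun h0 => by rw [h0, norm_zero] at hp1; norm_num at hp1
  have htr : (μ {p}).toReal = (μ ({-p} : Set E)).toReal := by
    have : ((μ {p}).toReal - (μ ({-p} : Set E)).toReal) • p = 0 := by
      rw [sub_smul, ← hbar]
      rw [smul_neg]
      abel
    rcases smul_eq_zero.1 this with h' | h'
    · linarith
    · exact absurd h' hp0
  have haeq : μ {p} = μ ({-p} : Set E) :=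
    (ENNReal.toReal_eq_toReal_iff' (measure_ne_top μ _) (measure_ne_top μ _)).1 htr
  have htr1 : (μ {p}).toReal + (μ ({-p} : Set E)).toReal = 1 := by
    rw [← ENNReal.toReal_add (measure_ne_top μ _) (measure_ne_top μ _), hsum]
    simp
  have hhalfR : (μ {p}).toReal = 1 / 2 := by
    rw [← htr] at htr1
    linarith
  have hhalf : μ {p} = 1 / 2 := by
    refine (ENNReal.toReal_eq_toReal_iff' (measure_ne_top μ _) (by norm_num)).1 ?_
    rw [hhalfR]
    norm_num [ENNReal.toReal_div]
  rw [hdec, ← haeq, hhalf, smul_add]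


end Space
end BjorckAux


/-- **Björck.**  Let `d ≥ 1` and `α > 2`.  Among Borel probability measures on the unit
sphere `S^d ⊂ ℝ^{d+1}`, the energy `I_α(μ) = ∬ ‖x − y‖^α dμ dμ` is maximized exactly by
the measures `(1/2)(δ_p + δ_{−p})` with `p ∈ S^d`: every such measure is a maximizer,
and every maximizer is of this form. -/
theorem bjorck_max_energy_antipodal (d : ℕ) (hd : 1 ≤ d) (α : ℝ) (hα : 2 < α) :
    ∀ μ : Measure (EuclideanSpace ℝ (Fin (d + 1))),
      IsProbabilityMeasure μ → μ (sphere (0 : EuclideanSpace ℝ (Fin (d + 1))) 1) = 1 →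
      ((∃ p : EuclideanSpace ℝ (Fin (d + 1)), ‖p‖ = 1 ∧
          μ = ((1 : ℝ≥0∞) / 2) • (Measure.dirac p + Measure.dirac (-p))) ↔
        (∀ ν : Measure (EuclideanSpace ℝ (Fin (d + 1))),
          IsProbabilityMeasure ν → ν (sphere (0 : EuclideanSpace ℝ (Fin (d + 1))) 1) = 1 →
          ∫ x, ∫ y, ‖x - y‖ ^ α ∂ν ∂ν ≤ ∫ x, ∫ y, ‖x - y‖ ^ α ∂μ ∂μ)) := by

  intro μ hμprob hμS
  haveI := hμprob
  constructor
  · rintro ⟨p, hp, rfl⟩ ν hν hνS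
    haveI := hν
    rw [BjorckAux.energy_antipodal (by linarith : (0:ℝ) < α) p hp]
    exact BjorckAux.energy_le hα ν hνS
  · intro hmax
    set p₀ : EuclideanSpace ℝ (Fin (d + 1)) :=
      EuclideanSpace.single (0 : Fin (d + 1)) (1 : ℝ) with hp₀def
    have hp₀ : ‖p₀‖ = 1 := by rw [hp₀def, EuclideanSpace.norm_single]; norm_num
    haveI := BjorckAux.antipodal_prob p₀
    have h0 := hmax _ (BjorckAux.antipodal_prob p₀) (BjorckAux.antipodal_sphere p₀ hp₀)
    rw [BjorckAux.energy_antipodal (by linarith : (0:ℝ) < α) p₀ hp₀] at h0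
    exact BjorckAux.maximizer_structure hα μ hμS h0
end

section
/- (Benedetto–Fickus) Let d ≥ 2 and consider the 2-frame energy I(μ) = ∬_{S^{d−1} × S^{d−1}} |⟨x, y⟩|² dμ(x) dμ(y) over Borel probability measures μ on the unit sphere S^{d−1} ⊂ ℝ^d. A measure μ minimizes I if and only if μ is isotropic, i.e., ∫_{S^{d−1}} ⟨x, u⟩² dμ(x) = 1/d for every unit vector u ∈ S^{d−1}; in particular, the minimal value of I is 1/d. -/
open MeasureTheory Metric RealInnerProductSpace
open scoped ENNReal

namespace BF

variable {d : ℕ}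

/-- The second moment matrix of a measure. -/
noncomputable def Mm (ν : Measure (EuclideanSpace ℝ (Fin d))) (i j : Fin d) : ℝ :=
  ∫ x, x i * x j ∂ν

lemma Mm_symm (ν : Measure (EuclideanSpace ℝ (Fin d))) (i j : Fin d) :
    Mm ν i j = Mm ν j i := by
  simp only [Mm, mul_comm]

lemma cont_coord (i : Fin d) : Continuous fun x : EuclideanSpace ℝ (Fin d) => x i :=
  (EuclideanSpace.proj (𝕜 := ℝ) i).continuous

lemma inner_eq_sum (x y : EuclideanSpace ℝ (Fin d)) : ⟪x, y⟫ = ∑ i, x i * y i := by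
  simp [PiLp.inner_apply, RCLike.inner_apply]
  exact Finset.sum_congr rfl fun i _ => mul_comm _ _

lemma abs_coord_le (x : EuclideanSpace ℝ (Fin d)) (i : Fin d) : |x i| ≤ ‖x‖ := by
  have := abs_real_inner_le_norm x (EuclideanSpace.single i (1:ℝ))
  simpa [EuclideanSpace.inner_single_right] using this

lemma ae_norm_one (ν : Measure (EuclideanSpace ℝ (Fin d))) [IsProbabilityMeasure ν]
    (hν : ν (sphere (0 : EuclideanSpace ℝ (Fin d)) 1) = 1) : ∀ᵐ x ∂ν, ‖x‖ = 1 := by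
  have h : ν (sphere (0 : EuclideanSpace ℝ (Fin d)) 1)ᶜ = 0 := by
    rw [measure_compl isClosed_sphere.measurableSet (measure_ne_top _ _), hν, measure_univ]
    simp
  refine ae_iff.2 ?_
  convert h using 2
  ext x
  simp [mem_sphere_zero_iff_norm]

lemma integrable_coord_mul (ν : Measure (EuclideanSpace ℝ (Fin d))) [IsProbabilityMeasure ν]
    (hν : ν (sphere (0 : EuclideanSpace ℝ (Fin d)) 1) = 1) (i j : Fin d) :
    Integrable (fun x : EuclideanSpace ℝ (Fin d) => x i * x j) ν := by
  refine Integrable.mono' (integrable_const 1)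
    (((cont_coord i).mul (cont_coord j)).aestronglyMeasurable) ?_
  filter_upwards [ae_norm_one ν hν] with x hx
  have hi : |x i| ≤ 1 := hx ▸ abs_coord_le x i
  have hj : |x j| ≤ 1 := hx ▸ abs_coord_le x j
  calc ‖x i * x j‖ = |x i| * |x j| := by rw [Real.norm_eq_abs, abs_mul]
    _ ≤ 1 * 1 := by
        exact mul_le_mul hi hj (abs_nonneg _) zero_le_one
    _ = 1 := one_mul 1

lemma quad_eq (ν : Measure (EuclideanSpace ℝ (Fin d))) [IsProbabilityMeasure ν]
    (hν : ν (sphere (0 : EuclideanSpace ℝ (Fin d)) 1) = 1) (u : EuclideanSpace ℝ (Fin d)) :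
    ∫ x, ⟪x, u⟫ ^ 2 ∂ν = ∑ i, ∑ j, u i * u j * Mm ν i j := by
  have h1 : ∀ x : EuclideanSpace ℝ (Fin d),
      ⟪x, u⟫ ^ 2 = ∑ i, ∑ j, u i * u j * (x i * x j) := by
    intro x
    rw [inner_eq_sum, sq, Finset.sum_mul_sum]
    exact Finset.sum_congr rfl fun i _ => Finset.sum_congr rfl fun j _ => by ring
  simp_rw [h1]
  rw [integral_finset_sum _ (fun i _ =>
    integrable_finset_sum _ fun j _ => (integrable_coord_mul ν hν i j).const_mul _)]
  refine Finset.sum_congr rfl fun i _ => ?_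
  rw [integral_finset_sum _ (fun j _ => (integrable_coord_mul ν hν i j).const_mul _)]
  exact Finset.sum_congr rfl fun j _ => integral_const_mul _ _

lemma double_eq (ν : Measure (EuclideanSpace ℝ (Fin d))) [IsProbabilityMeasure ν]
    (hν : ν (sphere (0 : EuclideanSpace ℝ (Fin d)) 1) = 1) :
    ∫ x, ∫ y, |⟪x, y⟫| ^ 2 ∂ν ∂ν = ∑ i, ∑ j, (Mm ν i j) ^ 2 := by
  have inner_eq : ∀ x : EuclideanSpace ℝ (Fin d),
      (∫ y, |⟪x, y⟫| ^ 2 ∂ν) = ∑ i, ∑ j, x i * x j * Mm ν i j := by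
    intro x
    have h1 : ∀ y : EuclideanSpace ℝ (Fin d),
        |⟪x, y⟫| ^ 2 = ∑ i, ∑ j, x i * x j * (y i * y j) := by
      intro y
      rw [sq_abs, inner_eq_sum, sq, Finset.sum_mul_sum]
      exact Finset.sum_congr rfl fun i _ => Finset.sum_congr rfl fun j _ => by ring
    simp_rw [h1]
    rw [integral_finset_sum _ (fun i _ =>
      integrable_finset_sum _ fun j _ => (integrable_coord_mul ν hν i j).const_mul _)]
    refine Finset.sum_congr rfl fun i _ => ?_
    rw [integral_finset_sum _ (fun j _ => (integrable_coord_mul ν hν i j).const_mul _)]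
    exact Finset.sum_congr rfl fun j _ => integral_const_mul _ _
  simp_rw [inner_eq]
  rw [integral_finset_sum _ (fun i _ =>
    integrable_finset_sum _ fun j _ => (integrable_coord_mul ν hν i j).mul_const _)]
  refine Finset.sum_congr rfl fun i _ => ?_
  rw [integral_finset_sum _ (fun j _ => (integrable_coord_mul ν hν i j).mul_const _)]
  refine Finset.sum_congr rfl fun j _ => ?_
  rw [integral_mul_const, sq]
  rfl

lemma trace_eq (ν : Measure (EuclideanSpace ℝ (Fin d))) [IsProbabilityMeasure ν]
    (hν : ν (sphere (0 : EuclideanSpace ℝ (Fin d)) 1) = 1) :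
    ∑ i, Mm ν i i = 1 := by
  simp only [Mm]
  rw [← integral_finset_sum _ (fun i _ => integrable_coord_mul ν hν i i)]
  have h : ∀ᵐ x ∂ν, (∑ i, x i * x i) = 1 := by
    filter_upwards [ae_norm_one ν hν] with x hx
    have h2 : (∑ i, x i * x i) = ⟪x, x⟫ := (inner_eq_sum x x).symm
    rw [h2, real_inner_self_eq_norm_sq, hx, one_pow]
  rw [integral_congr_ae h, integral_const]
  simp

lemma identity (hd : (d:ℝ) ≠ 0) (M : Fin d → Fin d → ℝ) (htr : ∑ i, M i i = 1) :
    ∑ i, ∑ j, (M i j) ^ 2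
      = 1 / d + ∑ i, ∑ j, (M i j - (if i = j then (1 / d : ℝ) else 0)) ^ 2 := by
  have h1 : ∀ i, ∑ j, (M i j - (if i = j then (1/(d:ℝ)) else 0)) ^ 2
      = (∑ j, (M i j) ^ 2) - ((2/(d:ℝ)) * M i i - 1/(d:ℝ)^2) := by
    intro i
    have e : ∀ j, (M i j - (if i = j then (1/(d:ℝ)) else 0)) ^ 2
        = (M i j) ^ 2 - (if i = j then ((2/(d:ℝ)) * M i j - 1/(d:ℝ)^2) else 0) := by
      intro j; split_ifs with h <;> ring
    rw [Finset.sum_congr rfl fun j _ => e j, Finset.sum_sub_distrib]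
    simp [Finset.sum_ite_eq]
  rw [Finset.sum_congr rfl fun i _ => h1 i, Finset.sum_sub_distrib]
  have h2 : ∑ i, ((2/(d:ℝ)) * M i i - 1/(d:ℝ)^2) = 2/(d:ℝ) - (d:ℝ) * (1/(d:ℝ)^2) := by
    rw [Finset.sum_sub_distrib, ← Finset.mul_sum, htr, Finset.sum_const, Finset.card_univ,
      Fintype.card_fin, nsmul_eq_mul]
    ring
  rw [h2]
  field_simp
  ring


lemma iso_Mm (μ : Measure (EuclideanSpace ℝ (Fin d))) [IsProbabilityMeasure μ]
    (hμsph : μ (sphere (0 : EuclideanSpace ℝ (Fin d)) 1) = 1)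
    (hiso : ∀ u : EuclideanSpace ℝ (Fin d), ‖u‖ = 1 → ∫ x, ⟪x, u⟫ ^ 2 ∂μ = 1 / d)
    (i j : Fin d) : Mm μ i j = if i = j then (1/(d:ℝ)) else 0 := by
  have hdiag : ∀ i, Mm μ i i = 1/(d:ℝ) := by
    intro i
    have h := hiso (EuclideanSpace.single i 1) (by simp)
    have h2 : ∀ x : EuclideanSpace ℝ (Fin d),
        ⟪x, EuclideanSpace.single i (1:ℝ)⟫ ^ 2 = x i * x i := by
      intro x
      rw [EuclideanSpace.inner_single_right]
      simp [sq]
    simp_rw [h2] at h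
    exact h
  by_cases hij : i = j
  · subst hij; simp [hdiag]
  · simp only [if_neg hij]
    set c : ℝ := (Real.sqrt 2)⁻¹ with hc
    have hc2 : c ^ 2 = 1/2 := by
      rw [hc, inv_pow, Real.sq_sqrt (by norm_num : (0:ℝ) ≤ 2)]
      norm_num
    set u : EuclideanSpace ℝ (Fin d) :=
      c • (EuclideanSpace.single i (1:ℝ) + EuclideanSpace.single j (1:ℝ)) with hu
    have hinner : ∀ x : EuclideanSpace ℝ (Fin d), ⟪x, u⟫ = c * (x i + x j) := by
      intro x
      rw [hu, real_inner_smul_right, inner_add_right,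
        EuclideanSpace.inner_single_right, EuclideanSpace.inner_single_right]
      simp
    have hnorm : ‖u‖ = 1 := by
      have huu : ⟪u, u⟫ = 1 := by
        rw [hinner u]
        have h1 : u i = c := by
          simp [hu, hij, PiLp.smul_apply, PiLp.add_apply, EuclideanSpace.single_apply]
        have h2 : u j = c := by
          simp [hu, Ne.symm hij, PiLp.smul_apply, PiLp.add_apply, EuclideanSpace.single_apply]
        rw [h1, h2]
        nlinarith [hc2]
      have h2 : ‖u‖ ^ 2 = 1 := by rw [← real_inner_self_eq_norm_sq]; exact huu
      rw [← Real.sqrt_sq (norm_nonneg u), h2, Real.sqrt_one]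
    have h := hiso u hnorm
    have hsq : ∀ x : EuclideanSpace ℝ (Fin d),
        ⟪x, u⟫ ^ 2 = c^2 * (x i * x i) + (c^2 * 2) * (x i * x j) + c^2 * (x j * x j) := by
      intro x; rw [hinner x]; ring
    simp_rw [hsq] at h
    have hA : Integrable (fun x : EuclideanSpace ℝ (Fin d) => c^2 * (x i * x i)) μ :=
      (integrable_coord_mul μ hμsph i i).const_mul _
    have hB : Integrable (fun x : EuclideanSpace ℝ (Fin d) => (c^2 * 2) * (x i * x j)) μ :=
      (integrable_coord_mul μ hμsph i j).const_mul _
    have hC : Integrable (fun x : EuclideanSpace ℝ (Fin d) => c^2 * (x j * x j)) μ :=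
      (integrable_coord_mul μ hμsph j j).const_mul _
    have hAB : Integrable (fun x : EuclideanSpace ℝ (Fin d) =>
        c^2 * (x i * x i) + (c^2 * 2) * (x i * x j)) μ := hA.add hB
    rw [integral_add hAB hC, integral_add hA hB,
      integral_const_mul, integral_const_mul, integral_const_mul] at h
    have hii := hdiag i
    have hjj := hdiag j
    rw [Mm] at hii hjj
    rw [show (∫ x : EuclideanSpace ℝ (Fin d), x i * x j ∂μ) = Mm μ i j from rfl] at h
    rw [hii, hjj, hc2] at h
    linarith

noncomputable def nu0 (d : ℕ) : Measure (EuclideanSpace ℝ (Fin d)) :=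
  (d : ℝ≥0∞)⁻¹ • ∑ i : Fin d, Measure.dirac (EuclideanSpace.single i (1:ℝ))

lemma nu0_prob (hd : 0 < d) : IsProbabilityMeasure (nu0 d) := by
  constructor
  rw [nu0, Measure.smul_apply, Measure.finset_sum_apply]
  simp only [Measure.dirac_apply' _ MeasurableSet.univ, Set.indicator_univ, Pi.one_apply]
  rw [Finset.sum_const, Finset.card_univ, Fintype.card_fin, nsmul_eq_mul, mul_one, smul_eq_mul]
  exact ENNReal.inv_mul_cancel (by exact_mod_cast hd.ne') (ENNReal.natCast_ne_top d)

lemma nu0_sphere (hd : 0 < d) :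
    nu0 d (sphere (0 : EuclideanSpace ℝ (Fin d)) 1) = 1 := by
  rw [nu0, Measure.smul_apply, Measure.finset_sum_apply]
  have h : ∀ i : Fin d, Measure.dirac (EuclideanSpace.single i (1:ℝ))
      (sphere (0 : EuclideanSpace ℝ (Fin d)) 1) = 1 := by
    intro i
    rw [Measure.dirac_apply' _ isClosed_sphere.measurableSet]
    have : EuclideanSpace.single i (1:ℝ) ∈ sphere (0 : EuclideanSpace ℝ (Fin d)) 1 := by
      simp [mem_sphere_zero_iff_norm]
    simp [Set.indicator_of_mem this]
  simp only [h]
  rw [Finset.sum_const, Finset.card_univ, Fintype.card_fin, nsmul_eq_mul, mul_one, smul_eq_mul]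
  exact ENNReal.inv_mul_cancel (by exact_mod_cast hd.ne') (ENNReal.natCast_ne_top d)

lemma nu0_Mm (hd : 0 < d) (i j : Fin d) :
    Mm (nu0 d) i j = if i = j then (1/(d:ℝ)) else 0 := by
  have hint : ∀ a : EuclideanSpace ℝ (Fin d),
      Integrable (fun x : EuclideanSpace ℝ (Fin d) => x i * x j) (Measure.dirac a) := by
    intro a
    refine (integrable_const (a i * a j)).congr ?_
    rw [Filter.eventuallyEq_iff_exists_mem]
    exact ⟨{a}, by rw [ae_dirac_eq]; simp, by intro x hx; simp_all⟩
  rw [Mm, nu0, integral_smul_measure, integral_finset_sum_measure (fun k _ => hint _)]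
  have h : ∀ k : Fin d, (∫ x : EuclideanSpace ℝ (Fin d), x i * x j
      ∂Measure.dirac (EuclideanSpace.single k (1:ℝ)))
      = (EuclideanSpace.single k (1:ℝ) i) * (EuclideanSpace.single k (1:ℝ) j) := by
    intro k
    exact integral_dirac _ _
  simp only [h, EuclideanSpace.single_apply, ite_mul, one_mul, zero_mul]
  rw [Finset.sum_ite_eq]
  simp only [Finset.mem_univ, if_true]
  by_cases hij : i = j <;> simp [hij, eq_comm, one_div]

end BF

open BF in
/-- **Benedetto–Fickus.**  For `d ≥ 2`, a Borel probability measure `μ` on the unit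
sphere `S^{d−1} ⊂ ℝ^d` minimizes the 2-frame energy `I(μ) = ∬ |⟨x,y⟩|² dμ dμ` if and
only if `μ` is isotropic, i.e. `∫ ⟨x,u⟩² dμ(x) = 1/d` for every unit vector `u`; in
particular the minimal value of `I` is `1/d`. -/
theorem benedetto_fickus (d : ℕ) (hd : 2 ≤ d)
    (μ : Measure (EuclideanSpace ℝ (Fin d)))
    (hμprob : IsProbabilityMeasure μ)
    (hμsph : μ (sphere (0 : EuclideanSpace ℝ (Fin d)) 1) = 1) :
    ((∀ ν : Measure (EuclideanSpace ℝ (Fin d)),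
        IsProbabilityMeasure ν → ν (sphere (0 : EuclideanSpace ℝ (Fin d)) 1) = 1 →
        ∫ x, ∫ y, |⟪x, y⟫| ^ 2 ∂μ ∂μ ≤ ∫ x, ∫ y, |⟪x, y⟫| ^ 2 ∂ν ∂ν) ↔
      (∀ u : EuclideanSpace ℝ (Fin d), ‖u‖ = 1 → ∫ x, ⟪x, u⟫ ^ 2 ∂μ = 1 / d)) ∧
    ((∀ u : EuclideanSpace ℝ (Fin d), ‖u‖ = 1 → ∫ x, ⟪x, u⟫ ^ 2 ∂μ = 1 / d) →
      ∫ x, ∫ y, |⟪x, y⟫| ^ 2 ∂μ ∂μ = 1 / d) := by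
  haveI := hμprob
  have hd' : 0 < d := lt_of_lt_of_le two_pos hd
  have hd0 : (d:ℝ) ≠ 0 := by positivity
  haveI := nu0_prob (d := d) hd'
  have hnu0 : ∫ x, ∫ y, |⟪x, y⟫| ^ 2 ∂(nu0 d) ∂(nu0 d) = 1 / d := by
    rw [double_eq _ (nu0_sphere hd')]
    have h : ∀ i j : Fin d, (Mm (nu0 d) i j) ^ 2 = if i = j then (1/(d:ℝ))^2 else 0 := by
      intro i j; rw [nu0_Mm hd']; split_ifs <;> simp
    simp only [h, Finset.sum_ite_eq, Finset.mem_univ, if_true]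
    rw [Finset.sum_const, Finset.card_univ, Fintype.card_fin, nsmul_eq_mul]
    field_simp
  have hIμ := double_eq μ hμsph
  have hid := identity hd0 (Mm μ) (trace_eq μ hμsph)
  have hvalue : (∀ u : EuclideanSpace ℝ (Fin d), ‖u‖ = 1 → ∫ x, ⟪x, u⟫ ^ 2 ∂μ = 1 / d) →
      ∫ x, ∫ y, |⟪x, y⟫| ^ 2 ∂μ ∂μ = 1 / d := by
    intro hiso
    rw [hIμ]
    have h := iso_Mm μ hμsph hiso
    have h2 : ∀ i j : Fin d, (Mm μ i j) ^ 2 = if i = j then (1/(d:ℝ))^2 else 0 := by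
      intro i j; rw [h i j]; split_ifs <;> simp
    simp only [h2, Finset.sum_ite_eq, Finset.mem_univ, if_true]
    rw [Finset.sum_const, Finset.card_univ, Fintype.card_fin, nsmul_eq_mul]
    field_simp
  refine ⟨⟨?_, ?_⟩, hvalue⟩
  · intro hmin
    have hle := hmin (nu0 d) (nu0_prob hd') (nu0_sphere hd')
    rw [hnu0] at hle
    rw [hIμ, hid] at hle
    have hS : ∑ i, ∑ j, (Mm μ i j - (if i = j then (1/(d:ℝ)) else 0)) ^ 2 = 0 := by
      have hnn : (0:ℝ) ≤ ∑ i, ∑ j, (Mm μ i j - (if i = j then (1/(d:ℝ)) else 0)) ^ 2 := by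
        positivity
      linarith
    have hM : ∀ i j : Fin d, Mm μ i j = if i = j then (1/(d:ℝ)) else 0 := by
      intro i j
      have h1 := (Finset.sum_eq_zero_iff_of_nonneg
        (fun i _ => Finset.sum_nonneg fun j _ => sq_nonneg _)).1 hS i (Finset.mem_univ i)
      have h2 := (Finset.sum_eq_zero_iff_of_nonneg
        (fun j _ => sq_nonneg _)).1 h1 j (Finset.mem_univ j)
      have h3 := sq_eq_zero_iff.mp h2
      exact sub_eq_zero.mp h3
    intro u hu
    rw [quad_eq μ hμsph u]
    have hstep : ∀ a : Fin d, ∑ b, u a * u b * Mm μ a b = u a * u a * (1/(d:ℝ)) := by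
      intro a
      rw [Finset.sum_congr rfl fun b _ => by rw [hM a b]]
      simp only [mul_ite, mul_zero, Finset.sum_ite_eq, Finset.mem_univ, if_true]
    rw [Finset.sum_congr rfl fun a _ => hstep a, ← Finset.sum_mul]
    have huu : (∑ a, u a * u a) = 1 := by
      rw [← inner_eq_sum u u, real_inner_self_eq_norm_sq, hu, one_pow]
    rw [huu, one_mul]
  · intro hiso ν hνp hνs
    haveI := hνp
    rw [hvalue hiso, double_eq ν hνs, identity hd0 (Mm ν) (trace_eq ν hνs)]
    have hnn : (0:ℝ) ≤ ∑ i, ∑ j, (Mm ν i j - (if i = j then (1/(d:ℝ)) else 0)) ^ 2 := by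
      positivity
    linarith
end

section
/- (Ehler–Okoudjou) Let d ≥ 2 and 0 < p < 2. For any orthonormal basis e₁, …, e_d of ℝ^d, the measure μ = (1/d)·Σ_{i=1}^d δ_{e_i} minimizes the p-frame energy I_p(μ) = ∬_{S^{d−1} × S^{d−1}} |⟨x, y⟩|^p dμ(x) dμ(y) among all Borel probability measures on the unit sphere S^{d−1} ⊂ ℝ^d, and the minimal value is 1/d. -/
open MeasureTheory Metric ENNReal RealInnerProductSpace


section Aux

variable {d : ℕ}

local notation "E" => EuclideanSpace ℝ (Fin d)

lemma eo_coord_sq_le (x : E) (k : Fin d) : x k ^ 2 ≤ ‖x‖ ^ 2 := by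
  have h := PiLp.norm_sq_eq_of_L2 (fun _ : Fin d => ℝ) x
  rw [h]
  have : x k ^ 2 = ‖x k‖ ^ 2 := by rw [Real.norm_eq_abs, sq_abs]
  rw [this]
  exact Finset.single_le_sum (f := fun i => ‖x i‖ ^ 2) (fun i _ => sq_nonneg _)
    (Finset.mem_univ k)

lemma eo_coord_abs_le (x : E) (k : Fin d) : |x k| ≤ ‖x‖ := by
  have := eo_coord_sq_le x k
  calc |x k| = Real.sqrt (x k ^ 2) := (Real.sqrt_sq_eq_abs _).symm
    _ ≤ Real.sqrt (‖x‖ ^ 2) := Real.sqrt_le_sqrt this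
    _ = ‖x‖ := Real.sqrt_sq (norm_nonneg x)

lemma eo_pointwise {p : ℝ} (hp0 : 0 < p) (hp2 : p < 2) (x y : E)
    (hx : ‖x‖ = 1) (hy : ‖y‖ = 1) : ⟪x, y⟫ ^ 2 ≤ |⟪x, y⟫| ^ p := by
  set t := |⟪x, y⟫| with ht
  have ht0 : 0 ≤ t := abs_nonneg _
  have ht1 : t ≤ 1 := by
    have := abs_real_inner_le_norm x y
    rwa [hx, hy, one_mul] at this
  rcases eq_or_lt_of_le ht0 with h0 | h0
  · have : ⟪x, y⟫ = 0 := abs_eq_zero.mp h0.symm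
    simp [ht, this, abs_zero, Real.zero_rpow hp0.ne']
  · have h2 : ⟪x, y⟫ ^ 2 = t ^ (2 : ℝ) := by
      rw [← sq_abs, ← Real.rpow_natCast t 2]; norm_num
    rw [h2]
    exact Real.rpow_le_rpow_of_exponent_ge h0 ht1 hp2.le

lemma eo_lower (hd : 2 ≤ d) {p : ℝ} (hp0 : 0 < p) (hp2 : p < 2)
    (ν : Measure E) [IsProbabilityMeasure ν]
    (hsph : ν (sphere (0 : E) 1) = 1) :
    1 / (d : ℝ) ≤ ∫ x, ∫ y, |⟪x, y⟫| ^ p ∂ν ∂ν := by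
  have hS : MeasurableSet (sphere (0 : E) 1) := isClosed_sphere.measurableSet
  have hae : ∀ᵐ x ∂ν, ‖x‖ = 1 := by
    have h0 : ν (sphere (0 : E) 1)ᶜ = 0 := (prob_compl_eq_zero_iff hS).2 hsph
    rw [ae_iff]
    convert h0 using 2
    ext x
    simp [mem_sphere_zero_iff_norm]
  -- coordinate products are continuous and integrable
  have hcontk : ∀ k : Fin d, Continuous fun x : E => x k := fun k =>
    (EuclideanSpace.proj (𝕜 := ℝ) k).continuous
  have hcont : ∀ k l : Fin d, Continuous fun x : E => x k * x l := fun k l =>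
    (hcontk k).mul (hcontk l)
  have hint : ∀ k l : Fin d, Integrable (fun x : E => x k * x l) ν := by
    intro k l
    refine (integrable_const (1 : ℝ)).mono ((hcont k l).aestronglyMeasurable) ?_
    filter_upwards [hae] with x hx
    rw [Real.norm_eq_abs, abs_mul, norm_one]
    calc |x k| * |x l| ≤ ‖x‖ * ‖x‖ :=
          mul_le_mul (eo_coord_abs_le x k) (eo_coord_abs_le x l) (abs_nonneg _) (norm_nonneg _)
      _ = 1 := by rw [hx]; ring
  set M : Fin d → Fin d → ℝ := fun k l => ∫ x, x k * x l ∂ν with hM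
  have hinner : ∀ x y : E, ⟪x, y⟫ = ∑ k, x k * y k := fun x y => by
    simp [PiLp.inner_apply, RCLike.inner_apply, conj_trivial]
    exact Finset.sum_congr rfl fun _ _ => mul_comm _ _
  have hgexp : ∀ x y : E, ⟪x, y⟫ ^ 2 = ∑ k, ∑ l, (x k * x l) * (y k * y l) := by
    intro x y
    rw [hinner, sq, Finset.sum_mul_sum]
    refine Finset.sum_congr rfl fun k _ => Finset.sum_congr rfl fun l _ => by ring
  have hGi : ∀ x : E, ∫ y, ⟪x, y⟫ ^ 2 ∂ν = ∑ k, ∑ l, (x k * x l) * M k l := by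
    intro x
    calc ∫ y, ⟪x, y⟫ ^ 2 ∂ν = ∫ y, ∑ k, ∑ l, (x k * x l) * (y k * y l) ∂ν :=
          integral_congr_ae (Filter.Eventually.of_forall fun y => hgexp x y)
      _ = ∑ k, ∑ l, (x k * x l) * M k l := by
          rw [integral_finset_sum _ fun k _ =>
            integrable_finset_sum _ fun l _ => (hint k l).const_mul _]
          refine Finset.sum_congr rfl fun k _ => ?_
          rw [integral_finset_sum _ fun l _ => (hint k l).const_mul _]
          exact Finset.sum_congr rfl fun l _ => integral_const_mul _ _
  have hGint : ∀ x : E, ‖x‖ = 1 → Integrable (fun y : E => ⟪x, y⟫ ^ 2) ν := by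
    intro x hx
    refine (integrable_const (1 : ℝ)).mono
      ((((continuous_inner (𝕜 := ℝ)).comp (continuous_const.prodMk continuous_id)).pow
        2).aestronglyMeasurable) ?_
    filter_upwards [hae] with y hy
    rw [Real.norm_eq_abs, norm_one, abs_pow]
    have h1 : |⟪x, y⟫| ≤ 1 := by
      have := abs_real_inner_le_norm x y
      rwa [hx, hy, one_mul] at this
    calc |⟪x, y⟫| ^ 2 ≤ 1 ^ 2 := pow_le_pow_left₀ (abs_nonneg _) h1 2
      _ = 1 := one_pow 2
  have hFint : ∀ x : E, ‖x‖ = 1 → Integrable (fun y : E => |⟪x, y⟫| ^ p) ν := by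
    intro x hx
    have hc : Continuous fun y : E => |⟪x, y⟫| ^ p :=
      (((continuous_inner (𝕜 := ℝ)).comp (continuous_const.prodMk continuous_id)).abs).rpow_const
        fun _ => Or.inr hp0.le
    refine (integrable_const (1 : ℝ)).mono hc.aestronglyMeasurable ?_
    filter_upwards [hae] with y hy
    rw [Real.norm_eq_abs, norm_one, abs_of_nonneg (Real.rpow_nonneg (abs_nonneg _) _)]
    have h1 : |⟪x, y⟫| ≤ 1 := by
      have := abs_real_inner_le_norm x y
      rwa [hx, hy, one_mul] at this
    exact Real.rpow_le_one (abs_nonneg _) h1 hp0.le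
  -- double integral of the square
  have hG2 : ∫ x, ∫ y, ⟪x, y⟫ ^ 2 ∂ν ∂ν = ∑ k, ∑ l, (M k l) ^ 2 := by
    calc ∫ x, ∫ y, ⟪x, y⟫ ^ 2 ∂ν ∂ν
        = ∫ x, ∑ k, ∑ l, (x k * x l) * M k l ∂ν :=
          integral_congr_ae (Filter.Eventually.of_forall fun x => hGi x)
      _ = ∑ k, ∑ l, (M k l) ^ 2 := by
          rw [integral_finset_sum _ fun k _ =>
            integrable_finset_sum _ fun l _ => (hint k l).mul_const _]
          refine Finset.sum_congr rfl fun k _ => ?_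
          rw [integral_finset_sum _ fun l _ => (hint k l).mul_const _]
          refine Finset.sum_congr rfl fun l _ => ?_
          rw [integral_mul_const, sq]
  -- trace
  have htr : ∑ k, M k k = 1 := by
    have h1 : ∑ k, M k k = ∫ x, ∑ k, x k * x k ∂ν :=
      (integral_finset_sum _ fun k _ => hint k k).symm
    rw [h1]
    have h2 : ∀ᵐ x ∂ν, ∑ k, x k * x k = 1 := by
      filter_upwards [hae] with x hx
      have h3 := PiLp.norm_sq_eq_of_L2 (fun _ : Fin d => ℝ) x
      calc ∑ k, x k * x k = ∑ k, ‖x k‖ ^ 2 :=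
            Finset.sum_congr rfl fun k _ => by rw [Real.norm_eq_abs, sq_abs, sq]
        _ = ‖x‖ ^ 2 := h3.symm
        _ = 1 := by rw [hx]; norm_num
    rw [integral_congr_ae h2]
    simp
  -- Cauchy–Schwarz
  have hd0 : (0 : ℝ) < d := by
    have : 0 < d := lt_of_lt_of_le (by norm_num) hd
    exact_mod_cast this
  have hCS : 1 / (d : ℝ) ≤ ∑ k, ∑ l, (M k l) ^ 2 := by
    have h2 : (∑ k, M k k) ^ 2 ≤ (d : ℝ) * ∑ k, (M k k) ^ 2 := by
      have := sq_sum_le_card_mul_sum_sq (s := (Finset.univ : Finset (Fin d)))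
        (f := fun k => M k k)
      simpa [Finset.card_univ] using this
    have h3 : ∑ k, (M k k) ^ 2 ≤ ∑ k, ∑ l, (M k l) ^ 2 :=
      Finset.sum_le_sum fun k _ =>
        Finset.single_le_sum (f := fun l => (M k l) ^ 2) (fun l _ => sq_nonneg _)
          (Finset.mem_univ k)
    have h4 : (d : ℝ) * ∑ k, (M k k) ^ 2 ≤ (d : ℝ) * ∑ k, ∑ l, (M k l) ^ 2 :=
      mul_le_mul_of_nonneg_left h3 hd0.le
    rw [htr] at h2
    rw [div_le_iff₀ hd0]
    nlinarith
  -- monotonicity between the two energies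
  have hFi_meas : AEStronglyMeasurable (fun x : E => ∫ y, |⟪x, y⟫| ^ p ∂ν) ν := by
    have hcf : Continuous fun q : E × E => |⟪q.1, q.2⟫| ^ p :=
      ((continuous_inner (𝕜 := ℝ)).abs).rpow_const fun _ => Or.inr hp0.le
    exact (hcf.stronglyMeasurable.integral_prod_right').aestronglyMeasurable
  have hGi_meas : AEStronglyMeasurable (fun x : E => ∫ y, ⟪x, y⟫ ^ 2 ∂ν) ν := by
    have hcg : Continuous fun q : E × E => ⟪q.1, q.2⟫ ^ 2 :=
      (continuous_inner (𝕜 := ℝ)).pow 2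
    exact (hcg.stronglyMeasurable.integral_prod_right').aestronglyMeasurable
  have hbound : ∀ (f : E → E → ℝ), (∀ x, ‖x‖ = 1 → Integrable (f x) ν) →
      (∀ x y, ‖x‖ = 1 → ‖y‖ = 1 → ‖f x y‖ ≤ 1) →
      AEStronglyMeasurable (fun x => ∫ y, f x y ∂ν) ν →
      Integrable (fun x => ∫ y, f x y ∂ν) ν := by
    intro f hfi hfb hfm
    refine (integrable_const (1 : ℝ)).mono hfm ?_
    filter_upwards [hae] with x hx
    rw [norm_one]
    calc ‖∫ y, f x y ∂ν‖ ≤ ∫ y, ‖f x y‖ ∂ν := norm_integral_le_integral_norm _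
      _ ≤ ∫ _, (1 : ℝ) ∂ν := by
          refine integral_mono_ae ((hfi x hx).norm) (integrable_const 1) ?_
          filter_upwards [hae] with y hy
          exact hfb x y hx hy
      _ = 1 := by simp
  have habs1 : ∀ x y : E, ‖x‖ = 1 → ‖y‖ = 1 → |⟪x, y⟫| ≤ 1 := by
    intro x y hx hy
    have := abs_real_inner_le_norm x y
    rwa [hx, hy, one_mul] at this
  have hFi_int : Integrable (fun x : E => ∫ y, |⟪x, y⟫| ^ p ∂ν) ν := by
    refine hbound _ hFint ?_ hFi_meas
    intro x y hx hy
    rw [Real.norm_eq_abs, abs_of_nonneg (Real.rpow_nonneg (abs_nonneg _) _)]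
    exact Real.rpow_le_one (abs_nonneg _) (habs1 x y hx hy) hp0.le
  have hGi_int : Integrable (fun x : E => ∫ y, ⟪x, y⟫ ^ 2 ∂ν) ν := by
    refine hbound _ hGint ?_ hGi_meas
    intro x y hx hy
    rw [Real.norm_eq_abs, abs_pow]
    calc |⟪x, y⟫| ^ 2 ≤ 1 ^ 2 := pow_le_pow_left₀ (abs_nonneg _) (habs1 x y hx hy) 2
      _ = 1 := one_pow 2
  have hmono : ∫ x, ∫ y, ⟪x, y⟫ ^ 2 ∂ν ∂ν ≤ ∫ x, ∫ y, |⟪x, y⟫| ^ p ∂ν ∂ν := by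
    refine integral_mono_ae hGi_int hFi_int ?_
    filter_upwards [hae] with x hx
    refine integral_mono_ae (hGint x hx) (hFint x hx) ?_
    filter_upwards [hae] with y hy
    exact eo_pointwise hp0 hp2 x y hx hy
  calc 1 / (d : ℝ) ≤ ∑ k, ∑ l, (M k l) ^ 2 := hCS
    _ = ∫ x, ∫ y, ⟪x, y⟫ ^ 2 ∂ν ∂ν := hG2.symm
    _ ≤ ∫ x, ∫ y, |⟪x, y⟫| ^ p ∂ν ∂ν := hmono


end Aux

lemma eo_integral_mu {d : ℕ} (e : Fin d → EuclideanSpace ℝ (Fin d))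
    (g : EuclideanSpace ℝ (Fin d) → ℝ) :
    ∫ x, g x ∂(((d : ℝ≥0∞))⁻¹ • ∑ i, Measure.dirac (e i)) = (d : ℝ)⁻¹ * ∑ i, g (e i) := by
  rw [integral_smul_measure, integral_finset_sum_measure]
  · simp [integral_dirac, ENNReal.toReal_inv, smul_eq_mul]
  · intro i _
    refine (integrable_const (g (e i))).congr ?_
    simp [Filter.EventuallyEq, ae_dirac_eq]

lemma eo_value {d : ℕ} (hd : 2 ≤ d) {p : ℝ} (hp0 : 0 < p)
    (e : Fin d → EuclideanSpace ℝ (Fin d)) (he : Orthonormal ℝ e) :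
    ∫ x, ∫ y, |⟪x, y⟫| ^ p
        ∂(((d : ℝ≥0∞))⁻¹ • ∑ i, Measure.dirac (e i))
        ∂(((d : ℝ≥0∞))⁻¹ • ∑ i, Measure.dirac (e i)) = 1 / d := by
  have hd0 : (d : ℝ) ≠ 0 := by positivity
  rw [orthonormal_iff_ite] at he
  rw [eo_integral_mu]
  have h1 : ∀ i, ∫ y, |⟪e i, y⟫| ^ p ∂(((d : ℝ≥0∞))⁻¹ • ∑ i, Measure.dirac (e i))
      = (d : ℝ)⁻¹ := by
    intro i
    rw [eo_integral_mu]
    have : ∀ j, |⟪e i, e j⟫| ^ p = if i = j then (1:ℝ) else 0 := by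
      intro j
      rw [he i j]
      by_cases h : i = j <;>
        simp [h, Real.one_rpow, Real.zero_rpow hp0.ne']
    simp only [this, Finset.sum_ite_eq, Finset.mem_univ, if_true, mul_one]
  simp only [h1]
  rw [Finset.sum_const, Finset.card_univ, Fintype.card_fin]
  field_simp
  rw [nsmul_eq_mul]; field_simp

/-- **Ehler–Okoudjou.**  For `d ≥ 2` and `0 < p < 2`, for any orthonormal basis
`e₁, …, e_d` of `ℝ^d`, the measure `μ = (1/d) ∑ δ_{eᵢ}` minimizes the `p`-frame energy
`I_p(μ) = ∬ |⟨x,y⟩|^p dμ dμ` among Borel probability measures on the unit sphere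
`S^{d−1} ⊂ ℝ^d`, and the minimal value is `1/d`. -/
theorem ehler_okoudjou (d : ℕ) (hd : 2 ≤ d) (p : ℝ) (hp0 : 0 < p) (hp2 : p < 2)
    (e : Fin d → EuclideanSpace ℝ (Fin d)) (he : Orthonormal ℝ e) :
    (∀ ν : Measure (EuclideanSpace ℝ (Fin d)),
        IsProbabilityMeasure ν → ν (sphere (0 : EuclideanSpace ℝ (Fin d)) 1) = 1 →
        ∫ x, ∫ y, |⟪x, y⟫| ^ p
            ∂(((d : ℝ≥0∞))⁻¹ • ∑ i, Measure.dirac (e i))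
            ∂(((d : ℝ≥0∞))⁻¹ • ∑ i, Measure.dirac (e i)) ≤
          ∫ x, ∫ y, |⟪x, y⟫| ^ p ∂ν ∂ν) ∧
      ∫ x, ∫ y, |⟪x, y⟫| ^ p
          ∂(((d : ℝ≥0∞))⁻¹ • ∑ i, Measure.dirac (e i))
          ∂(((d : ℝ≥0∞))⁻¹ • ∑ i, Measure.dirac (e i)) = 1 / d := by
  have hval := eo_value hd hp0 e he
  refine ⟨?_, hval⟩
  intro ν hprob hsph
  rw [hval]
  haveI := hprob
  exact eo_lower hd hp0 hp2 ν hsph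
end
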